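/- arXiv:1709.08839 — 5 statements merged into one kernel-verified Lean document; each statement's English description precedes it below -/
import Mathlib

section
/- Let 𝓗 be a Hilbert space, p ≥ 2, and T_0, …, T_{p−1} isometries on 𝓗 with Σ T_i T_i* = 1 such that T_{p−1} is a pure isometry (T_{p−1}^k T_{p−1}^{*k} → 0 strongly). If U, W are unitaries on 𝓗 satisfying U T_i = T_{i+1} = W T_i for all 0 ≤ i ≤ p−2 and U T_{p−1} = T_0 U, W T_{p−1} = T_0 W, then U = W. -/
open ContinuousLinearMap Filter
open scoped InnerProductSpace

set_option maxHeartbeats 1000000 in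
/-- Uniqueness of the intertwining unitary: if `T_0, …, T_{p−1}` is a Cuntz family of
isometries with `T_{p−1}` pure, and unitaries `U, W` satisfy `U T_i = T_{i+1} = W T_i`
for `i ≤ p−2` and `U T_{p−1} = T_0 U`, `W T_{p−1} = T_0 W`, then `U = W`. -/
theorem stmt7 (H : Type*) [NormedAddCommGroup H] [InnerProductSpace ℂ H]
    [CompleteSpace H] (p : ℕ) (hp : 2 ≤ p)
    (T : Fin p → (H →L[ℂ] H))
    (hiso : ∀ i, (adjoint (T i)) ∘L (T i) = 1)
    (hcuntz : ∑ i : Fin p, (T i) ∘L (adjoint (T i)) = 1)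
    (hpure : ∀ ξ : H,
      Tendsto (fun k : ℕ =>
        ((T ⟨p - 1, by omega⟩) ^ k * (adjoint (T ⟨p - 1, by omega⟩)) ^ k) ξ)
        atTop (nhds 0))
    (U W : H →L[ℂ] H)
    (hU : U ∘L adjoint U = 1 ∧ adjoint U ∘L U = 1)
    (hW : W ∘L adjoint W = 1 ∧ adjoint W ∘L W = 1)
    (hstepU : ∀ i : Fin p, ∀ h : (i : ℕ) + 1 < p, U ∘L T i = T ⟨(i : ℕ) + 1, h⟩)
    (hstepW : ∀ i : Fin p, ∀ h : (i : ℕ) + 1 < p, W ∘L T i = T ⟨(i : ℕ) + 1, h⟩)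
    (hlastU : U ∘L T ⟨p - 1, by omega⟩ = (T ⟨0, by omega⟩) ∘L U)
    (hlastW : W ∘L T ⟨p - 1, by omega⟩ = (T ⟨0, by omega⟩) ∘L W) :
    U = W := by
  -- notation
  set A : H →L[ℂ] H := T ⟨p - 1, by omega⟩ with hAdef
  set T0 : H →L[ℂ] H := T ⟨0, by omega⟩ with hT0def
  set D : H →L[ℂ] H := U - W with hDdef
  -- isometries preserve norms
  have hnorm : ∀ (S : H →L[ℂ] H), adjoint S ∘L S = 1 → ∀ y : H, ‖S y‖ = ‖y‖ := by
    intro S hS y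
    have h1 : (adjoint S) (S y) = y := by
      rw [← ContinuousLinearMap.comp_apply, hS, ContinuousLinearMap.one_apply]
    have h2 : (⟪S y, S y⟫_ℂ : ℂ) = ⟪y, y⟫_ℂ := by
      rw [← ContinuousLinearMap.adjoint_inner_right, h1]
    have h4 : ‖S y‖ ^ 2 = ‖y‖ ^ 2 := by
      rw [inner_self_eq_norm_sq_to_K, inner_self_eq_norm_sq_to_K] at h2
      exact_mod_cast h2
    nlinarith [norm_nonneg (S y), norm_nonneg y]
  -- D kills T i for i < p - 1
  have hDT : ∀ i : Fin p, (i : ℕ) + 1 < p → D * T i = 0 := by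
    intro i h
    show (U - W) ∘L T i = 0
    rw [ContinuousLinearMap.sub_comp, hstepU i h, hstepW i h, sub_self]
  -- D A = T0 D
  have hDA : D * A = T0 * D := by
    show (U - W) ∘L A = T0 ∘L (U - W)
    rw [ContinuousLinearMap.sub_comp, ContinuousLinearMap.comp_sub, hlastU, hlastW]
  -- key identity
  have key : D = T0 * D * adjoint A := by
    have hcuntz' : ∑ i : Fin p, T i * adjoint (T i) = 1 := hcuntz
    have h1 : D = ∑ i : Fin p, D * (T i * adjoint (T i)) := by
      rw [← Finset.mul_sum, hcuntz', mul_one]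
    have h2 : ∑ i : Fin p, D * (T i * adjoint (T i)) = D * (A * adjoint A) := by
      apply Finset.sum_eq_single_of_mem (⟨p - 1, by omega⟩ : Fin p) (Finset.mem_univ _)
      intro i _ hne
      have hi : (i : ℕ) + 1 < p := by
        have h1 := i.isLt
        rcases Nat.lt_or_ge ((i : ℕ) + 1) p with h | h
        · exact h
        · exact absurd (Fin.ext (show (i : ℕ) = p - 1 by omega)) hne
      rw [← mul_assoc, hDT i hi, zero_mul]
    conv_lhs => rw [h1]
    rw [h2, ← mul_assoc, hDA]
  have keyk : ∀ k : ℕ, D = T0 ^ k * D * (adjoint A) ^ k := by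
    intro k
    induction k with
    | zero => simp
    | succ n ih =>
      calc D = T0 ^ n * D * (adjoint A) ^ n := ih
        _ = T0 ^ n * (T0 * D * adjoint A) * (adjoint A) ^ n := by rw [← key]
        _ = T0 ^ (n + 1) * D * (adjoint A) ^ (n + 1) := by
            rw [pow_succ, pow_succ']
            simp only [mul_assoc]
  -- norm preservation for powers of T0
  have hT0pow : ∀ (k : ℕ) (y : H), ‖(T0 ^ k) y‖ = ‖y‖ := by
    intro k
    induction k with
    | zero =>
      intro y
      rw [pow_zero, ContinuousLinearMap.one_apply]
    | succ n ih =>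
      intro y
      rw [pow_succ, ContinuousLinearMap.mul_apply, ih, hnorm T0 (hiso _)]
  -- D = 0
  have hD0 : D = 0 := by
    ext x
    rw [ContinuousLinearMap.zero_apply]
    have hbound : ∀ k : ℕ, ‖D x‖ ^ 2 ≤ (‖D‖ ^ 2 * ‖x‖) * ‖(A ^ k * (adjoint A) ^ k) x‖ := by
      intro k
      have h1 : D x = (T0 ^ k) (D (((adjoint A) ^ k) x)) := by
        conv_lhs => rw [keyk k]
        rfl
      have h2 : ‖D x‖ ≤ ‖D‖ * ‖((adjoint A) ^ k) x‖ := by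
        rw [h1, hT0pow k]
        exact D.le_opNorm _
      have h3 : ‖((adjoint A) ^ k) x‖ ^ 2 ≤ ‖x‖ * ‖(A ^ k * (adjoint A) ^ k) x‖ := by
        have hadj : (adjoint A) ^ k = adjoint (A ^ k) := by
          rw [← ContinuousLinearMap.star_eq_adjoint, ← ContinuousLinearMap.star_eq_adjoint,
            ← star_pow]
        have hip : (⟪((adjoint A) ^ k) x, ((adjoint A) ^ k) x⟫_ℂ : ℂ)
            = ⟪x, (A ^ k * (adjoint A) ^ k) x⟫_ℂ := by
          conv_lhs => rw [hadj]
          rw [ContinuousLinearMap.adjoint_inner_left, ContinuousLinearMap.mul_apply, hadj]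
        have hre : ‖((adjoint A) ^ k) x‖ ^ 2
            = RCLike.re (⟪x, (A ^ k * (adjoint A) ^ k) x⟫_ℂ : ℂ) := by
          rw [← hip, inner_self_eq_norm_sq]
        rw [hre]
        calc RCLike.re (⟪x, (A ^ k * (adjoint A) ^ k) x⟫_ℂ : ℂ)
            ≤ ‖(⟪x, (A ^ k * (adjoint A) ^ k) x⟫_ℂ : ℂ)‖ := RCLike.re_le_norm _
          _ ≤ ‖x‖ * ‖(A ^ k * (adjoint A) ^ k) x‖ := norm_inner_le_norm _ _
      have h4 : ‖D x‖ ^ 2 ≤ ‖D‖ ^ 2 * ‖((adjoint A) ^ k) x‖ ^ 2 := by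
        calc ‖D x‖ ^ 2 ≤ (‖D‖ * ‖((adjoint A) ^ k) x‖) ^ 2 :=
              pow_le_pow_left₀ (norm_nonneg (D x)) h2 2
          _ = ‖D‖ ^ 2 * ‖((adjoint A) ^ k) x‖ ^ 2 := by ring
      calc ‖D x‖ ^ 2 ≤ ‖D‖ ^ 2 * ‖((adjoint A) ^ k) x‖ ^ 2 := h4
        _ ≤ ‖D‖ ^ 2 * (‖x‖ * ‖(A ^ k * (adjoint A) ^ k) x‖) := by
            apply mul_le_mul_of_nonneg_left h3 (by positivity)
        _ = (‖D‖ ^ 2 * ‖x‖) * ‖(A ^ k * (adjoint A) ^ k) x‖ := by ring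
    have h0 : Tendsto (fun k : ℕ => ‖(A ^ k * (adjoint A) ^ k) x‖) atTop (nhds 0) := by
      simpa using (hpure x).norm
    have htend : Tendsto (fun k : ℕ => (‖D‖ ^ 2 * ‖x‖) * ‖(A ^ k * (adjoint A) ^ k) x‖)
        atTop (nhds 0) := by
      simpa using h0.const_mul (‖D‖ ^ 2 * ‖x‖)
    have hle : ‖D x‖ ^ 2 ≤ 0 := ge_of_tendsto' htend hbound
    have : ‖D x‖ = 0 := by nlinarith [norm_nonneg (D x)]
    exact norm_eq_zero.mp this
  have := sub_eq_zero.mp hD0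
  exact this
end

section
/- Let X be a metrizable compact space and Φ : X → X a continuous map such that for every continuous f : X → 𝕋 there exists λ_f ∈ 𝕋 with f(Φ(x)) = λ_f · f(x) for all x ∈ X. Then Φ is the identity map. In particular, if K is a metrizable compact abelian group and χ ∈ K satisfies: for every continuous f : K → 𝕋 there is λ_f ∈ 𝕋 with f(χξ) = λ_f f(ξ) for all ξ ∈ K, then χ = 1. -/
/-!
Suppose `Φ x₀ ≠ x₀`, and take an Urysohn function `g : X → [0, 1]` with `g x₀ = 0` and
`g (Φ x₀) = 1`. Applied to `exp (i g)`, the hypothesis makes `exp (i (g ∘ Φ - g))` constant;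
since `g ∘ Φ - g` takes values in `[-1, 1]`, on which `Circle.exp` is injective, `g ∘ Φ - g`
itself is constant. Comparing its values at `x₀` and `Φ x₀` forces `g (Φ (Φ x₀)) = 2`.
-/

open Set unitInterval

variable {X : Type*} [TopologicalSpace X]

lemma sub_comp_eq_of_forall_circle_eq_mul {Φ : X → X}
    (hΦ : ∀ f : C(X, Circle), ∃ l : Circle, ∀ x, f (Φ x) = l * f x)
    {g : X → I} (hg : Continuous g) (x y : X) :
    (g (Φ x) : ℝ) - g x = g (Φ y) - g y := by
  obtain ⟨l, hl⟩ := hΦ ⟨fun x ↦ Circle.exp (g x), by fun_prop⟩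
  have hexp : ∀ x, Circle.exp ((g (Φ x) : ℝ) - g x) = l := fun x ↦ by
    rw [Circle.exp_sub, div_eq_iff_eq_mul]
    exact hl x
  have hmem : ∀ x, (g (Φ x) : ℝ) - g x ∈ Icc (-1) 1 := fun x ↦ by
    constructor <;> linarith [nonneg (g x), le_one (g x), nonneg (g (Φ x)), le_one (g (Φ x))]
  refine Circle.exp_injOn_Icc ?_ (hmem x) (hmem y) ((hexp x).trans (hexp y).symm)
  linarith [Real.pi_gt_three]

theorem eq_id_of_forall_circle_comp_eq_mul [T35Space X] {Φ : X → X}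
    (hΦ : ∀ f : C(X, Circle), ∃ l : Circle, ∀ x, f (Φ x) = l * f x) : Φ = id := by
  funext x₀
  by_contra hne
  obtain ⟨g, hg, hgx₀, hgΦx₀⟩ := CompletelyRegularSpace.completely_regular x₀ {Φ x₀}
    isClosed_singleton (Ne.symm hne)
  have hconst := sub_comp_eq_of_forall_circle_eq_mul hΦ hg x₀ (Φ x₀)
  rw [hgx₀, hgΦx₀ rfl, Pi.one_apply, Icc.coe_one, Icc.coe_zero] at hconst
  linarith [le_one (g (Φ (Φ x₀)))]

/-- If `Φ` is a continuous self-map of a metrizable compact space `X` such that every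
continuous circle-valued function satisfies `f ∘ Φ = λ_f · f` for some `λ_f ∈ 𝕋`, then
`Φ = id`. In particular, if `χ` in a metrizable compact abelian group `K` satisfies
`f(χξ) = λ_f f(ξ)` for all continuous `f : K → 𝕋`, then `χ = 1`. -/
theorem stmt9 :
    (∀ (X : Type) [TopologicalSpace X] [CompactSpace X] [TopologicalSpace.MetrizableSpace X]
        (Φ : X → X), Continuous Φ →
        (∀ f : C(X, Circle), ∃ l : Circle, ∀ x : X, f (Φ x) = l * f x) →
        Φ = id) ∧
    (∀ (K : Type) [TopologicalSpace K] [CompactSpace K] [TopologicalSpace.MetrizableSpace K]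
        [CommGroup K] [IsTopologicalGroup K] (χ : K),
        (∀ f : C(K, Circle), ∃ l : Circle, ∀ ξ : K, f (χ * ξ) = l * f ξ) →
        χ = 1) := by
  refine ⟨fun X _ _ _ Φ _ hΦ ↦ eq_id_of_forall_circle_comp_eq_mul hΦ,
    fun K _ _ _ _ _ χ hχ ↦ ?_⟩
  simpa using congrFun (eq_id_of_forall_circle_comp_eq_mul (Φ := (χ * ·)) hχ) 1
end

section
/- Let 𝔄 be a unital C*-algebra and φ : 𝔄 → 𝔄 a unital *-endomorphism such that for every unitary u ∈ 𝔄 there exists χ_u ∈ 𝕋 with φ(u) = χ_u · u. Then φ is the identity map on 𝔄. -/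
/-!
For self-adjoint `a`, the unitaries `exp (i t a)` are mapped to scalar multiples of themselves, so
the curve `t ↦ φ (exp (i t a)) * exp (-i t a)` stays in the line `ℂ • 1`; differentiating at
`t = 0` gives `φ a - a ∈ ℂ • 1`, and by linearity this holds for every `a`. Writing
`φ a = a + c • 1` and comparing `φ (a * a)` with `φ a * φ a` gives `2 c a ∈ ℂ • 1`, so either
`c = 0` or `a` is a scalar; in both cases `φ a = a`.
-/

open NormedSpace ComplexStarModule

theorem HasDerivAt.mem_of_forall_mem {𝕜 F : Type*} [NontriviallyNormedField 𝕜]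
    [NormedAddCommGroup F] [NormedSpace 𝕜 F] {f : 𝕜 → F} {f' : F} {x : 𝕜}
    {S : Submodule 𝕜 F} (hS : IsClosed (S : Set F)) (hf : HasDerivAt f f' x)
    (h : ∀ t, f t ∈ S) : f' ∈ S := by
  have hderiv := range_deriv_subset_closure_span_image f dense_univ ⟨x, rfl⟩
  rw [Set.image_univ, hf.deriv] at hderiv
  exact closure_minimal (Submodule.span_le.2 (Set.range_subset_iff.2 h)) hS hderiv

theorem AlgHom.apply_eq_self_of_sub_mem_span_one {K A : Type*} [Field K] [NeZero (2 : K)]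
    [Ring A] [Algebra K A] (φ : A →ₐ[K] A) {a : A} (ha : φ a - a ∈ K ∙ (1 : A))
    (ha2 : φ (a * a) - a * a ∈ K ∙ (1 : A)) : φ a = a := by
  obtain ⟨c, hc⟩ := Submodule.mem_span_singleton.1 ha
  obtain ⟨d, hd⟩ := Submodule.mem_span_singleton.1 ha2
  rw [eq_sub_iff_add_eq'] at hc hd
  have hsq : (2 * c) • a = (d - c * c) • (1 : A) := by
    rw [map_mul, ← hc] at hd
    simp only [add_mul, mul_add, one_mul, mul_one, smul_mul_assoc, mul_smul_comm] at hd
    linear_combination (norm := module) -hd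
  by_cases hc0 : c = 0
  · rw [← hc, hc0, zero_smul, add_zero]
  · have ha_scalar : a = algebraMap K A ((2 * c)⁻¹ * (d - c * c)) := by
      rw [Algebra.algebraMap_eq_smul_one, mul_smul, ← hsq,
        inv_smul_smul₀ (mul_ne_zero two_ne_zero hc0)]
    rw [ha_scalar, AlgHom.commutes]

namespace StarAlgHom

variable {A : Type*} [NormedRing A] [NormedAlgebra ℂ A] [StarRing A] [ContinuousStar A]
  [CompleteSpace A] [StarModule ℂ A] (φ : A →⋆ₐ[ℂ] A)

theorem apply_sub_mem_span_one_of_isSelfAdjoint (hφc : Continuous φ)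
    (hφ : ∀ u ∈ unitary A, φ u ∈ ℂ ∙ u) {a : A} (ha : IsSelfAdjoint a) :
    φ a - a ∈ ℂ ∙ (1 : A) := by
  let +nondep : NormedAlgebra ℚ A := .restrictScalars ℚ ℂ A
  set x := Complex.I • a
  have hx : x ∈ skewAdjoint A := ha.smul_mem_skewAdjoint Complex.conj_I
  have hcurve (t : ℝ) : exp (t • φ x) * exp (t • -x) ∈ (ℂ ∙ (1 : A)).restrictScalars ℝ := by
    obtain ⟨χ, hχ⟩ := Submodule.mem_span_singleton.1 <|
      hφ _ (exp_mem_unitary_of_mem_skewAdjoint (skewAdjoint.smul_mem t hx))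
    rw [map_exp φ hφc, LinearMapClass.map_smul_of_tower] at hχ
    rw [← hχ, smul_mul_assoc, smul_neg, ← exp_add_of_commute (Commute.refl _).neg_right,
      add_neg_cancel, exp_zero]
    exact Submodule.mem_span_singleton.2 ⟨χ, rfl⟩
  have hderiv :=
    (hasDerivAt_exp_smul_const (φ x) (0 : ℝ)).mul (hasDerivAt_exp_smul_const (-x) (0 : ℝ))
  simp only [zero_smul, exp_zero, one_mul, mul_one, ← sub_eq_add_neg] at hderiv
  have hIx : Complex.I • (φ a - a) ∈ ℂ ∙ (1 : A) := by
    rw [smul_sub, ← map_smul, ← Submodule.restrictScalars_mem ℝ]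
    exact hderiv.mem_of_forall_mem (Submodule.closed_of_finiteDimensional (ℂ ∙ (1 : A))) hcurve
  exact (Submodule.smul_mem_iff _ Complex.I_ne_zero).1 hIx

theorem apply_sub_mem_span_one (hφc : Continuous φ) (hφ : ∀ u ∈ unitary A, φ u ∈ ℂ ∙ u)
    (a : A) : φ a - a ∈ ℂ ∙ (1 : A) := by
  have hre := φ.apply_sub_mem_span_one_of_isSelfAdjoint hφc hφ (ℜ a).prop
  have him := φ.apply_sub_mem_span_one_of_isSelfAdjoint hφc hφ (ℑ a).prop
  have hsplit : φ a - a = (φ (ℜ a) - ℜ a) + Complex.I • (φ (ℑ a) - ℑ a) := by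
    conv_lhs => rw [← realPart_add_I_smul_imaginaryPart a]
    rw [map_add, map_smul]
    module
  rw [hsplit]
  exact add_mem hre (Submodule.smul_mem _ _ him)

end StarAlgHom

/-- A unital *-endomorphism `φ` of a unital C*-algebra that multiplies every unitary by
a scalar of modulus one (`φ(u) = χ_u · u`) is the identity. -/
theorem stmt10 (A : Type*) [NormedRing A] [StarRing A] [CStarRing A]
    [NormedAlgebra ℂ A] [CompleteSpace A] [StarModule ℂ A]
    (φ : A →⋆ₐ[ℂ] A)
    (hφ : ∀ u : A, u ∈ unitary A → ∃ χ : ℂ, ‖χ‖ = 1 ∧ φ u = χ • u) :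
    ∀ a : A, φ a = a := by
  let : CStarAlgebra A :=
    { ‹NormedRing A›, ‹StarRing A›, ‹CStarRing A›, ‹NormedAlgebra ℂ A›, ‹StarModule ℂ A›,
      ‹CompleteSpace A› with }
  have hφc : Continuous φ :=
    AddMonoidHomClass.continuous_of_bound φ 1 fun a ↦ by
      simpa using NonUnitalStarAlgHom.norm_apply_le φ a
  have hunit (u : A) (hu : u ∈ unitary A) : φ u ∈ ℂ ∙ u :=
    let ⟨χ, _, hχ⟩ := hφ u hu
    Submodule.mem_span_singleton.2 ⟨χ, hχ.symm⟩
  intro a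
  exact φ.toAlgHom.apply_eq_self_of_sub_mem_span_one (φ.apply_sub_mem_span_one hφc hunit a)
    (φ.apply_sub_mem_span_one hφc hunit (a * a))
end

section
/- Let P ⊂ ℕ× be the multiplicative monoid generated by a set S of pairwise relatively prime integers ≥ 2 with |S| ≥ 2, and let ψ : P → C(𝕋,𝕋) satisfy ψ_{pq}(z) = ψ_p(z)ψ_q(z^p) for all p,q ∈ P. If ψ_p = ψ_q = f for two distinct generators p, q ∈ S, then f is constant. -/
/-!
Evaluating the twisted relation at `pq = qp` in both orders gives `f (z ^ p) = f (z ^ q)`.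
Lifting to `ℝ` via `t ↦ exp t`, say with `p < q`, this says `g t = g ((p / q) * t)` for
`g = f ∘ exp`; iterating, `g t = g ((p / q) ^ n * t) → g 0`, so `g`, hence `f`, is constant.
-/

open Filter Topology

theorem apply_eq_apply_zero_of_apply_mul_eq {X : Type*} [TopologicalSpace X] [T2Space X]
    {g : ℝ → X} (hg : ContinuousAt g 0) {a : ℝ} (ha : |a| < 1) (h : ∀ t, g (a * t) = g t)
    (t : ℝ) : g t = g 0 := by
  have hpow : ∀ n : ℕ, g (a ^ n * t) = g t := by
    intro n
    induction n with
    | zero => simp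
    | succ n ih => rw [pow_succ', mul_assoc, h, ih]
  have hlim : Tendsto (fun n : ℕ => a ^ n * t) atTop (𝓝 0) := by
    simpa using (tendsto_pow_atTop_nhds_zero_of_abs_lt_one ha).mul_const t
  have hconv : Tendsto (fun n : ℕ => g (a ^ n * t)) atTop (𝓝 (g 0)) := hg.tendsto.comp hlim
  simp only [hpow] at hconv
  exact tendsto_nhds_unique tendsto_const_nhds hconv

theorem Circle.apply_eq_apply_one_of_apply_pow_eq {X : Type*} [TopologicalSpace X]
    [T2Space X] {f : Circle → X} (hf : Continuous f) {p q : ℕ} (hpq : p < q)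
    (h : ∀ z : Circle, f (z ^ p) = f (z ^ q)) (z : Circle) : f z = f 1 := by
  obtain ⟨t, rfl⟩ := Circle.exp_surjective z
  have hq : (0 : ℝ) < q := by exact_mod_cast (Nat.zero_le p).trans_lt hpq
  have hratio : |(p : ℝ) / q| < 1 := by
    rw [abs_of_nonneg (by positivity), div_lt_one hq]
    exact_mod_cast hpq
  have hscale : ∀ s : ℝ, f (Circle.exp (p / q * s)) = f (Circle.exp s) := fun s =>
    calc f (Circle.exp (p / q * s)) = f (Circle.exp (s / q) ^ p) := by
          rw [← Circle.exp_natCast_mul, div_mul_comm, mul_comm]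
      _ = f (Circle.exp (s / q) ^ q) := h _
      _ = f (Circle.exp s) := by rw [← Circle.exp_natCast_mul, mul_div_cancel₀ _ hq.ne']
  simpa using apply_eq_apply_zero_of_apply_mul_eq (g := f ∘ Circle.exp)
    (hf.comp Circle.exp.continuous).continuousAt hratio hscale t

theorem stmt12_general (S : Set ℕ)
    (ψ : ℕ → C(Circle, Circle))
    (htwist : ∀ p q : ℕ, p ∈ Submonoid.closure S → q ∈ Submonoid.closure S →
      ∀ z : Circle, ψ (p * q) z = ψ p z * ψ q (z ^ p))
    (p q : ℕ) (hp : p ∈ S) (hq : q ∈ S) (hpq : p ≠ q)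
    (f : C(Circle, Circle)) (hfp : ψ p = f) (hfq : ψ q = f) :
    ∃ c : Circle, ∀ z : Circle, f z = c := by
  have hpS := Submonoid.subset_closure hp
  have hqS := Submonoid.subset_closure hq
  have hrel : ∀ z : Circle, f (z ^ p) = f (z ^ q) := fun z => by
    have hswap := htwist q p hqS hpS z
    rw [mul_comm q p, htwist p q hpS hqS z, hfp, hfq] at hswap
    exact mul_left_cancel hswap
  refine ⟨f 1, ?_⟩
  rcases hpq.lt_or_gt with h | h
  · exact Circle.apply_eq_apply_one_of_apply_pow_eq f.continuous h hrel
  · exact Circle.apply_eq_apply_one_of_apply_pow_eq f.continuous h fun z => (hrel z).symm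

/-- For `P = ⟨S⟩` with `S` a set of pairwise coprime integers `≥ 2`, `|S| ≥ 2`, and a
θ-twisted homomorphism `ψ`, if `ψ_p = ψ_q = f` for two distinct generators `p, q ∈ S`,
then `f` is constant. -/
theorem stmt12 (S : Set ℕ) (hS2 : ∀ s ∈ S, 2 ≤ s)
    (hcop : ∀ a ∈ S, ∀ b ∈ S, a ≠ b → Nat.Coprime a b)
    (hcard : S.Nontrivial)
    (ψ : ℕ → C(Circle, Circle))
    (htwist : ∀ p q : ℕ, p ∈ Submonoid.closure S → q ∈ Submonoid.closure S →
      ∀ z : Circle, ψ (p * q) z = ψ p z * ψ q (z ^ p))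
    (p q : ℕ) (hp : p ∈ S) (hq : q ∈ S) (hpq : p ≠ q)
    (f : C(Circle, Circle)) (hfp : ψ p = f) (hfq : ψ q = f) :
    ∃ c : Circle, ∀ z : Circle, f z = c :=
  stmt12_general S ψ htwist p q hp hq hpq f hfp hfq
end

section
/- Let p ≥ 2 and consider operators on ℓ²(ℤ): U ξ_m = ξ_{m+1} and S ξ_m = ξ_{pm}. Define T_i := U^i S for 0 ≤ i ≤ p−1. Then (T_i) is a Cuntz family (T_i*T_j = δ_{ij}, Σ T_i T_i* = 1), the isometries T_0 and T_{p−1} each have 1 as an eigenvalue (with eigenvectors ξ_0 and ξ_{−1} respectively), and if p = 3 the operator T_1 has empty point spectrum. -/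
open ContinuousLinearMap

/-- On `ℓ²(ℤ)`, with `U` the bilateral shift (`Uξ_m = ξ_{m+1}`) and `S` the isometry
`ξ_m ↦ ξ_{pm}`, the operators `T_i = U^i S` form a Cuntz family; `T_0` and `T_{p−1}`
have eigenvalue `1` with eigenvectors `ξ_0` and `ξ_{−1}`; and for `p = 3` the operator
`T_1` has empty point spectrum. -/
theorem stmt17 (p : ℕ) (hp : 2 ≤ p)
    (U S : lp (fun _ : ℤ => ℂ) 2 →L[ℂ] lp (fun _ : ℤ => ℂ) 2)
    (hU : ∀ (ξ : lp (fun _ : ℤ => ℂ) 2) (m : ℤ), (U ξ) m = ξ (m - 1))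
    (hS : ∀ (ξ : lp (fun _ : ℤ => ℂ) 2) (m : ℤ),
      (S ξ) m = if (p : ℤ) ∣ m then ξ (m / p) else 0) :
    (∀ i j : Fin p,
      (adjoint (U ^ (i : ℕ) * S)) ∘L (U ^ (j : ℕ) * S) = if i = j then 1 else 0) ∧
    (∑ i : Fin p, (U ^ (i : ℕ) * S) ∘L (adjoint (U ^ (i : ℕ) * S)) = 1) ∧
    ((U ^ 0 * S) (lp.single 2 (0 : ℤ) (1 : ℂ)) = lp.single 2 (0 : ℤ) (1 : ℂ)) ∧
    ((U ^ (p - 1) * S) (lp.single 2 (-1 : ℤ) (1 : ℂ)) = lp.single 2 (-1 : ℤ) (1 : ℂ)) ∧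
    (p = 3 → ∀ (ξ : lp (fun _ : ℤ => ℂ) 2) (lam : ℂ),
      (U ^ 1 * S) ξ = lam • ξ → ξ = 0) := by
  have hpne : ((p:ℤ)) ≠ 0 := by exact_mod_cast (by omega : p ≠ 0)
  have hUpow : ∀ (i : ℕ) (ξ : lp (fun _ : ℤ => ℂ) 2) (m : ℤ), ((U ^ i) ξ) m = ξ (m - i) := by
    intro i
    induction i with
    | zero => intro ξ m; simp
    | succ n ih =>
      intro ξ m
      rw [pow_succ, ContinuousLinearMap.mul_apply, ih, hU]
      push_cast; ring_nf
  have hT : ∀ (i : ℕ) (ξ : lp (fun _ : ℤ => ℂ) 2) (m : ℤ),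
      ((U ^ i * S) ξ) m = if (p:ℤ) ∣ m - i then ξ ((m - i) / p) else 0 := by
    intro i ξ m
    rw [ContinuousLinearMap.mul_apply, hUpow, hS]
  have hTsingle : ∀ (i : ℕ) (k : ℤ),
      (U ^ i * S) (lp.single 2 k (1:ℂ)) = lp.single 2 ((p:ℤ) * k + i) (1:ℂ) := by
    intro i k
    apply lp.ext; funext m
    rw [hT]
    by_cases hm : m = (p:ℤ) * k + i
    · rw [if_pos ⟨k, by omega⟩]
      have h2 : (m - (i:ℤ)) / p = k := by
        rw [show (m - (i:ℤ)) = p * k by omega, Int.mul_ediv_cancel_left _ hpne]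
      rw [h2, hm, lp.single_apply_self, lp.single_apply_self]
    · rw [lp.single_apply_ne _ _ _ hm]
      split_ifs with hd
      · rcases hd with ⟨t, ht⟩
        have h2 : (m - (i:ℤ)) / p = t := by rw [ht, Int.mul_ediv_cancel_left _ hpne]
        rw [h2, lp.single_apply_ne]
        intro h; exact hm (by rw [h] at ht; omega)
      · rfl
  have hadj : ∀ (i : ℕ) (ξ : lp (fun _ : ℤ => ℂ) 2) (k : ℤ),
      (adjoint (U ^ i * S) ξ) k = ξ ((p:ℤ) * k + i) := by
    intro i ξ k
    have h1 : (adjoint (U ^ i * S) ξ) k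
        = @inner ℂ _ _ (lp.single 2 k (1:ℂ)) (adjoint (U ^ i * S) ξ) := by
      rw [lp.inner_single_left]
      simp [RCLike.inner_apply]
    rw [h1, ContinuousLinearMap.adjoint_inner_right, hTsingle, lp.inner_single_left]
    simp [RCLike.inner_apply]
  -- auxiliary: distinct residues
  have hres : ∀ (i j : Fin p) (t : ℤ), ((i:ℤ) - (j:ℤ) = p * t) → i = j := by
    intro i j t ht
    have hi := i.isLt; have hj := j.isLt
    have habs : |(i:ℤ) - (j:ℤ)| < p := by
      rw [abs_lt]; constructor <;> [skip; skip] <;> push_cast <;> omega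
    have h0 : (i:ℤ) - (j:ℤ) = 0 := Int.eq_zero_of_abs_lt_dvd ⟨t, ht⟩ habs
    have : (i:ℕ) = (j:ℕ) := by omega
    exact Fin.ext this
  refine ⟨?_, ?_, ?_, ?_, ?_⟩
  · -- T_i* T_j = δ_ij
    intro i j
    ext ξ k
    rw [ContinuousLinearMap.comp_apply, hadj, hT]
    by_cases hij : i = j
    · subst hij
      rw [if_pos rfl, if_pos ⟨k, by ring⟩]
      simp only [ContinuousLinearMap.one_apply]
      congr 1
      rw [show ((p:ℤ) * k + i - i) = p * k by ring, Int.mul_ediv_cancel_left _ hpne]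
    · rw [if_neg hij, if_neg (by
        rintro ⟨t, ht⟩
        exact hij (hres i j (t - k) (by linear_combination ht)))]
      simp
  · -- sum T_i T_i* = 1
    ext ξ m
    have hcoe : (((∑ i : Fin p, (U ^ (i:ℕ) * S) ∘L (adjoint (U ^ (i:ℕ) * S))) ξ) m)
        = ∑ i : Fin p, (((U ^ (i:ℕ) * S) ∘L (adjoint (U ^ (i:ℕ) * S))) ξ) m := by
      rw [ContinuousLinearMap.sum_apply, lp.coeFn_sum, Finset.sum_apply]
    rw [hcoe]
    have hterm : ∀ i : Fin p,
        (((U ^ (i:ℕ) * S) ∘L (adjoint (U ^ (i:ℕ) * S))) ξ) m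
          = if (p:ℤ) ∣ m - (i:ℕ) then ξ m else 0 := by
      intro i
      rw [ContinuousLinearMap.comp_apply, hT]
      split_ifs with hd
      · rw [hadj, Int.mul_ediv_cancel' hd, sub_add_cancel]
      · rfl
    simp only [hterm]
    -- unique residue
    have h0le : 0 ≤ m % p := Int.emod_nonneg m hpne
    have hlt : m % p < p := Int.emod_lt_of_pos m (by omega)
    set i₀ : Fin p := ⟨(m % p).toNat, by omega⟩ with hi₀
    have hc : ((i₀:ℕ):ℤ) = m % p := by simp [hi₀]; omega
    have hdvd₀ : (p:ℤ) ∣ m - (i₀:ℕ) := ⟨m / p, by rw [hc, Int.emod_def]; ring⟩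
    rw [Finset.sum_eq_single i₀]
    · rw [if_pos hdvd₀]; simp
    · intro i _ hne
      rw [if_neg]
      rintro ⟨t, ht⟩
      rcases hdvd₀ with ⟨t₀, ht₀⟩
      exact hne (hres i i₀ (t₀ - t) (by linear_combination ht₀ - ht))
    · intro h; exact absurd (Finset.mem_univ i₀) h
  · -- T_0 ξ_0 = ξ_0
    apply lp.ext; funext m
    rw [hT]
    by_cases hm : m = 0
    · subst hm
      rw [if_pos (by simp), show ((0:ℤ) - (0:ℕ)) / p = 0 by simp]
    · rw [lp.single_apply_ne _ _ _ hm]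
      split_ifs with hd
      · rcases hd with ⟨t, ht⟩
        have h2 : (m - ((0:ℕ):ℤ)) / p = t := by rw [ht, Int.mul_ediv_cancel_left _ hpne]
        rw [h2, lp.single_apply_ne]
        intro h; apply hm; subst h; omega
      · rfl
  · -- T_{p-1} ξ_{-1} = ξ_{-1}
    apply lp.ext; funext m
    rw [hT]
    have hcast : (((p - 1 : ℕ)):ℤ) = (p:ℤ) - 1 := by omega
    by_cases hm : m = -1
    · subst hm
      rw [if_pos ⟨-1, by omega⟩]
      have h2 : ((-1:ℤ) - ((p-1:ℕ):ℤ)) / p = -1 := by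
        rw [show ((-1:ℤ) - ((p-1:ℕ):ℤ)) = p * (-1) by omega, Int.mul_ediv_cancel_left _ hpne]
      rw [h2]
    · rw [lp.single_apply_ne _ _ _ hm]
      split_ifs with hd
      · rcases hd with ⟨t, ht⟩
        have h2 : (m - ((p-1:ℕ):ℤ)) / p = t := by rw [ht, Int.mul_ediv_cancel_left _ hpne]
        rw [h2, lp.single_apply_ne]
        intro h; apply hm; subst h; omega
      · rfl
  · -- p = 3 : empty point spectrum of T_1
    intro hp3 ξ lam heig
    subst hp3
    have hcoord : ∀ m : ℤ, (if (3:ℤ) ∣ m - 1 then ξ ((m - 1) / 3) else 0) = lam * ξ m := by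
      intro m
      have := congrArg (fun f : lp (fun _ : ℤ => ℂ) 2 => f m) heig
      simp only at this
      rw [hT 1 ξ m] at this
      rw [lp.coeFn_smul] at this
      simp only [Pi.smul_apply, smul_eq_mul] at this
      push_cast at this
      exact this
    have hrel : ∀ k : ℤ, ξ k = lam * ξ (3 * k + 1) := by
      intro k
      have := hcoord (3 * k + 1)
      rw [if_pos ⟨k, by ring⟩] at this
      rw [show (3 * k + 1 - 1) / 3 = k by
        rw [show 3 * k + 1 - 1 = 3 * k by ring, Int.mul_ediv_cancel_left _ (by norm_num)]] at this
      exact this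
    have hzero : ∀ m : ℤ, ¬ (3:ℤ) ∣ m - 1 → lam * ξ m = 0 := by
      intro m hm
      have := hcoord m
      rw [if_neg hm] at this
      exact this.symm
    by_cases hlam : lam = 0
    · apply lp.ext; funext k
      have := hrel k
      rw [hlam, zero_mul] at this
      simpa using this
    · have key : ∀ n : ℕ, ∀ k : ℤ, k.natAbs = n → ξ k = 0 := by
        intro n
        induction n using Nat.strong_induction_on with
        | _ n ih =>
        intro k hn
        by_cases hd : (3:ℤ) ∣ k - 1
        · rcases hd with ⟨k', hk'⟩
          have hk : k = 3 * k' + 1 := by omega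
          by_cases hk'0 : k' = 0
          · have h0 : ξ 0 = 0 := by
              have := hzero 0 (by decide)
              exact (mul_eq_zero.mp this).resolve_left hlam
            have h01 := hrel 0
            rw [h0] at h01
            have h1 : ξ 1 = 0 := by
              have := (mul_eq_zero.mp h01.symm).resolve_left hlam
              simpa using this
            rw [hk, hk'0]; simpa using h1
          · have hlt : k'.natAbs < n := by omega
            have hk'z : ξ k' = 0 := ih k'.natAbs hlt k' rfl
            have hh := hrel k'
            rw [hk'z, ← hk] at hh
            exact (mul_eq_zero.mp hh.symm).resolve_left hlam
        · have := hzero k hd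
          exact (mul_eq_zero.mp this).resolve_left hlam

      apply lp.ext; funext k
      exact key k.natAbs k rfl
end
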